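/- For all n ≥ 0, the sequence a defined by a_0 = 1, a_{2n+1} = Σ_{i=0}^{n} a_{2i}·a_{2n-2i}, and a_{2n} = Σ_{i=0}^{2n-1} a_i·a_{2n-1-i} satisfies a_{2n+1} = (2^{n+1}/(2n+2))·C(3n+1, n). -/

import Mathlib

/-!
Write `e n = a (2n)` and `o n = a (2n+1)`. The recursions say that `o` is the convolution square
of `e` and that `e (n+1)` is twice the convolution of `e` and `o` at `n`. The Raney numbers
`R r n = r/(3n+r) * C(3n+r, n)` satisfy `R r * R s = R (r+s)` under convolution (by double
induction from the Pascal-type rule `R (r+1) (n+1) = R r (n+1) + R (r+3) n`) and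
`R 1 (n+1) = R 3 n`, so strong induction gives `e n = 2^n R 1 n` and `o n = 2^n R 2 n`; the
closed form is `R 2 n` rewritten.
-/

open Finset

/-- Raney numbers `r/(pn+r) * C(pn+r, n)`; the case `r = n = 0`, where the fraction is `0/0`,
is set to `1`. -/
def raney (p r n : ℕ) : ℚ :=
  if r = 0 ∧ n = 0 then 1 else (r : ℚ) / (p * n + r : ℕ) * (p * n + r).choose n

@[simp]
lemma raney_zero_right (p r : ℕ) : raney p r 0 = 1 := by
  rcases Nat.eq_zero_or_pos r with rfl | hr
  · simp [raney]
  · simp [raney, hr.ne']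

@[simp]
lemma raney_zero_succ (p n : ℕ) : raney p 0 (n + 1) = 0 := by
  simp [raney]

lemma raney_succ_succ (p r n : ℕ) :
    raney p (r + 1) (n + 1) = raney p r (n + 1) + raney p (r + p) n := by
  obtain ⟨rfl, rfl⟩ | hrp : (p = 0 ∧ r = 0) ∨ 0 < r + p := by omega
  · cases n <;> simp [raney, Nat.choose_eq_zero_of_lt]
  obtain ⟨N, hN⟩ : ∃ N, p * (n + 1) + r = N := ⟨_, rfl⟩
  have hNq : (N : ℚ) = p * (n + 1) + r := by rw [← hN]; push_cast; ring
  have hN0 : (N : ℚ) ≠ 0 := by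
    have : 0 < N := by rw [← hN]; nlinarith
    positivity
  have hpascal : ((N + 1).choose (n + 1) : ℚ) = N.choose n + N.choose (n + 1) := by
    exact_mod_cast Nat.choose_succ_succ' N n
  have habsorb : ((N : ℚ) + 1) * N.choose n = (N + 1).choose (n + 1) * (n + 1) := by
    exact_mod_cast Nat.add_one_mul_choose_eq N n
  unfold raney
  rw [if_neg (by omega), if_neg (by omega), if_neg (by omega), ← add_assoc, hN,
    show p * n + (r + p) = N by rw [← hN]; ring]
  push_cast
  field_simp
  linear_combination (N + 1) * r * hpascal + ((N + 1).choose (n + 1) : ℚ) * hNq - p * habsorb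

lemma raney_one_succ (p n : ℕ) : raney p 1 (n + 1) = raney p p n := by
  simpa using raney_succ_succ p 0 n

lemma sum_antidiagonal_raney_mul_raney (p r s n : ℕ) :
    ∑ ij ∈ antidiagonal n, raney p r ij.1 * raney p s ij.2 = raney p (r + s) n := by
  induction n generalizing s with
  | zero => simp
  | succ n ihn =>
    induction s with
    | zero => simp [Nat.sum_antidiagonal_succ']
    | succ s ihs =>
      rw [Nat.sum_antidiagonal_succ'] at ihs ⊢
      simp only [raney_zero_right, raney_succ_succ, mul_add, sum_add_distrib] at ihs ⊢
      rw [ihn, ← add_assoc, ihs, ← add_assoc, ← raney_succ_succ]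
      rfl

lemma sum_antidiagonal_pow_mul_raney (x : ℚ) (p r s n : ℕ) :
    ∑ ij ∈ antidiagonal n, x ^ ij.1 * raney p r ij.1 * (x ^ ij.2 * raney p s ij.2) =
      x ^ n * raney p (r + s) n := by
  rw [← sum_antidiagonal_raney_mul_raney, mul_sum]
  refine sum_congr rfl fun ij hij => ?_
  rw [← mem_antidiagonal.mp hij, pow_add]
  ring

lemma raney_three_two (n : ℕ) :
    raney 3 2 n = 2 / (2 * n + 2) * (3 * n + 1).choose n := by
  have h := Nat.add_one_mul_choose_eq (3 * n + 1) (2 * n + 1)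
  rw [Nat.choose_symm_of_eq_add (by omega : 3 * n + 1 = (2 * n + 1) + n),
    Nat.choose_symm_of_eq_add (by omega : 3 * n + 1 + 1 = (2 * n + 1 + 1) + n)] at h
  have hq : ((3 * n + 2 : ℕ) : ℚ) * (3 * n + 1).choose n = (3 * n + 2).choose n * (2 * n + 2) := by
    exact_mod_cast h
  rw [raney, if_neg (by omega)]
  push_cast at hq ⊢
  field_simp
  linear_combination -hq

lemma sum_range_two_mul {M : Type*} [AddCommMonoid M] (f : ℕ → M) (n : ℕ) :
    ∑ i ∈ range (2 * n), f i = ∑ j ∈ range n, (f (2 * j) + f (2 * j + 1)) := by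
  induction n with
  | zero => simp
  | succ n ih => rw [mul_add_one, sum_range_succ, sum_range_succ, ih, sum_range_succ, add_assoc]

section

variable {a : ℕ → ℕ}

lemma odd_term_eq_raney
    (hodd : ∀ n : ℕ, a (2 * n + 1) = ∑ i ∈ range (n + 1), a (2 * i) * a (2 * n - 2 * i))
    (n : ℕ) (ih : ∀ k ≤ n, (a (2 * k) : ℚ) = 2 ^ k * raney 3 1 k) :
    (a (2 * n + 1) : ℚ) = 2 ^ n * raney 3 2 n :=
  calc (a (2 * n + 1) : ℚ)
      = ∑ ij ∈ antidiagonal n, 2 ^ ij.1 * raney 3 1 ij.1 * (2 ^ ij.2 * raney 3 1 ij.2) := by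
        rw [hodd, Nat.sum_antidiagonal_eq_sum_range_succ
          (fun i j => 2 ^ i * raney 3 1 i * (2 ^ j * raney 3 1 j))]
        push_cast
        refine sum_congr rfl fun i hi => ?_
        have hin : i ≤ n := Nat.lt_succ_iff.mp (mem_range.mp hi)
        rw [show 2 * n - 2 * i = 2 * (n - i) by omega, ih i hin, ih (n - i) (by omega)]
    _ = 2 ^ n * raney 3 2 n := sum_antidiagonal_pow_mul_raney 2 3 1 1 n

lemma even_term_eq_raney
    (heven : ∀ n : ℕ, 1 ≤ n → a (2 * n) = ∑ i ∈ range (2 * n), a i * a (2 * n - 1 - i))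
    (m : ℕ) (ih : ∀ k ≤ m, (a (2 * k) : ℚ) = 2 ^ k * raney 3 1 k ∧
      (a (2 * k + 1) : ℚ) = 2 ^ k * raney 3 2 k) :
    (a (2 * (m + 1)) : ℚ) = 2 ^ (m + 1) * raney 3 1 (m + 1) :=
  calc (a (2 * (m + 1)) : ℚ)
      = ∑ ij ∈ antidiagonal m, (2 ^ ij.1 * raney 3 1 ij.1 * (2 ^ ij.2 * raney 3 2 ij.2) +
          2 ^ ij.1 * raney 3 2 ij.1 * (2 ^ ij.2 * raney 3 1 ij.2)) := by
        rw [heven (m + 1) m.succ_pos, Nat.cast_sum, sum_range_two_mul,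
          Nat.sum_antidiagonal_eq_sum_range_succ (fun i j => 2 ^ i * raney 3 1 i *
            (2 ^ j * raney 3 2 j) + 2 ^ i * raney 3 2 i * (2 ^ j * raney 3 1 j))]
        refine sum_congr rfl fun j hj => ?_
        have hjm : j ≤ m := Nat.lt_succ_iff.mp (mem_range.mp hj)
        rw [show 2 * (m + 1) - 1 - 2 * j = 2 * (m - j) + 1 by omega,
          show 2 * (m + 1) - 1 - (2 * j + 1) = 2 * (m - j) by omega]
        push_cast
        rw [(ih j hjm).1, (ih j hjm).2, (ih (m - j) (by omega)).1, (ih (m - j) (by omega)).2]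
    _ = 2 ^ m * raney 3 3 m + 2 ^ m * raney 3 3 m := by
        rw [sum_add_distrib, sum_antidiagonal_pow_mul_raney, sum_antidiagonal_pow_mul_raney]
    _ = 2 ^ (m + 1) * raney 3 1 (m + 1) := by
        rw [raney_one_succ, pow_succ]
        ring

lemma cast_eq_two_pow_mul_raney (h0 : a 0 = 1)
    (hodd : ∀ n : ℕ, a (2 * n + 1) = ∑ i ∈ range (n + 1), a (2 * i) * a (2 * n - 2 * i))
    (heven : ∀ n : ℕ, 1 ≤ n → a (2 * n) = ∑ i ∈ range (2 * n), a i * a (2 * n - 1 - i))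
    (n : ℕ) :
    (a (2 * n) : ℚ) = 2 ^ n * raney 3 1 n ∧ (a (2 * n + 1) : ℚ) = 2 ^ n * raney 3 2 n := by
  induction n using Nat.strong_induction_on with
  | _ n ih =>
    have heven_n : (a (2 * n) : ℚ) = 2 ^ n * raney 3 1 n := by
      rcases n with _ | m
      · simp [h0]
      · exact even_term_eq_raney heven m fun k hk => ih k (by omega)
    refine ⟨heven_n, odd_term_eq_raney hodd n fun k hk => ?_⟩
    rcases hk.lt_or_eq with hk | rfl
    · exact (ih k hk).1
    · exact heven_n

end

theorem stmt1 (a : ℕ → ℕ) (h0 : a 0 = 1)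
    (hodd : ∀ n : ℕ, a (2 * n + 1) = ∑ i ∈ Finset.range (n + 1), a (2 * i) * a (2 * n - 2 * i))
    (heven : ∀ n : ℕ, 1 ≤ n → a (2 * n) = ∑ i ∈ Finset.range (2 * n), a i * a (2 * n - 1 - i)) :
    ∀ n : ℕ, (a (2 * n + 1) : ℚ) = 2 ^ (n + 1) / (2 * n + 2) * Nat.choose (3 * n + 1) n := by
  intro n
  rw [(cast_eq_two_pow_mul_raney h0 hodd heven n).2, raney_three_two]
  ring
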